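/- The Single-Linkage partitioning function satisfies Consistency: if Γ = SL(s,k) and s' is a Γ-transformation of s (s'(i,j) ≥ s(i,j) whenever i,j lie in the same cluster of Γ, and s'(i,j) ≤ s(i,j) whenever i,j lie in different clusters of Γ), then SL(s',k) = Γ. -/

import Mathlib

noncomputable section

open Finset

/-- `s` is a similarity function: symmetric and positive off the diagonal. -/
def Sim {n : ℕ} (s : Fin n → Fin n → ℝ) : Prop :=
  (∀ i j, s i j = s j i) ∧ ∀ i j, i ≠ j → 0 < s i j

/-- The cluster of a clustering `C` containing the point `i`. -/
def clusterOf {n : ℕ} (C : Finset (Finset (Fin n))) (i : Fin n) : Finset (Fin n) :=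
  (C.filter fun c => i ∈ c).sup id

/-- All ordered pairs of points lying in different clusters of `C`, tagged with
their similarity, ordered lexicographically by (similarity, pair). -/
def interPairs {n : ℕ} (s : Fin n → Fin n → ℝ) (C : Finset (Finset (Fin n))) :
    Finset (ℝ ×ₗ (Fin n ×ₗ Fin n)) :=
  (Finset.univ.filter fun p : Fin n × Fin n => clusterOf C p.1 ≠ clusterOf C p.2).image
    fun p => toLex (s p.1 p.2, toLex p)

/-- One agglomerative step of Single-Linkage: merge the two clusters joined by
the largest-similarity inter-cluster edge (ties broken by a fixed order on pairs). -/
def slStep {n : ℕ} (s : Fin n → Fin n → ℝ) (C : Finset (Finset (Fin n))) :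
    Finset (Finset (Fin n)) :=
  match (interPairs s C).max with
  | none => C
  | some m =>
      let p := ofLex (ofLex m).2
      insert (clusterOf C p.1 ∪ clusterOf C p.2)
        ((C.erase (clusterOf C p.1)).erase (clusterOf C p.2))

/-- The Single-Linkage `k`-partitioning: start from singletons and merge `n - k` times. -/
def SL {n : ℕ} (s : Fin n → Fin n → ℝ) (k : ℕ) : Finset (Finset (Fin n)) :=
  (slStep s)^[n - k] (Finset.univ.image fun i => ({i} : Finset (Fin n)))


/-- Points `i` and `j` lie in the same cluster of `Γ`. -/
def SameCluster {n : ℕ} (Γ : Finset (Finset (Fin n))) (i j : Fin n) : Prop :=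
  ∃ c ∈ Γ, i ∈ c ∧ j ∈ c

/-!
Single linkage merges along a maximum spanning forest, so every cluster of `Γ = SL s k` is
connected by edges whose key (similarity, then the fixed order on pairs) exceeds the key of every
edge between distinct clusters of `Γ`. Run single linkage on `s'`. While the current partition
strictly refines `Γ`, one of these dominant edges crosses it; a `Γ`-transformation only raises
its similarity and only lowers similarities between `Γ`-clusters, so the heaviest crossing edge
for `s'` again lies inside a `Γ`-cluster. Hence every merge stays inside `Γ`, and after `n - k`
merges both partitions have `k` clusters and coincide.
-/

theorem Relation.EqvGen.exists_rel_apply_ne {α β : Type*} {r : α → α → Prop} {f : α → β}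
    {a b : α} (h : Relation.EqvGen r a b) (hab : f a ≠ f b) :
    ∃ x y, r x y ∧ f x ≠ f y := by
  by_contra! hr
  exact hab ((InvImage.equivalence _ f eq_equivalence).eqvGen_iff.mp (h.mono hr))

theorem Prod.Lex.eq_of_toLex_le_of_toLex_le {α β : Type*} [PartialOrder α] [PartialOrder β]
    {a b a' b' : α} {x y : β} (h : toLex (a, x) ≤ toLex (b, y))
    (h' : toLex (b', y) ≤ toLex (a', x)) (ha : a' ≤ a) (hb : b ≤ b') : x = y := by
  simp only [Prod.Lex.toLex_le_toLex] at h h'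
  rcases h with h | ⟨h, hxy⟩ <;> rcases h' with h' | ⟨h', hyx⟩
  all_goals first | exact le_antisymm hxy hyx | order

namespace SingleLinkage

variable {n : ℕ}

structure IsPartition (C : Finset (Finset (Fin n))) : Prop where
  exists_mem : ∀ i, ∃ c ∈ C, i ∈ c
  disjoint : ∀ c ∈ C, ∀ d ∈ C, c ≠ d → Disjoint c d
  nonempty : ∀ c ∈ C, c.Nonempty

def Refines (D Γ : Finset (Finset (Fin n))) : Prop :=
  ∀ i j, clusterOf D i = clusterOf D j → clusterOf Γ i = clusterOf Γ j

def merge (C : Finset (Finset (Fin n))) (a b : Finset (Fin n)) : Finset (Finset (Fin n)) :=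
  insert (a ∪ b) ((C.erase a).erase b)

def singletons (n : ℕ) : Finset (Finset (Fin n)) :=
  univ.image fun i => {i}

namespace IsPartition

variable {C : Finset (Finset (Fin n))} (hC : IsPartition C)
include hC

lemma clusterOf_eq {c : Finset (Fin n)} {i : Fin n} (hc : c ∈ C) (hi : i ∈ c) :
    clusterOf C i = c := by
  have : C.filter (i ∈ ·) = {c} :=
    eq_singleton_iff_unique_mem.mpr ⟨mem_filter.mpr ⟨hc, hi⟩, fun d hd => by
      by_contra hdc
      obtain ⟨hdC, hid⟩ := mem_filter.mp hd
      exact disjoint_left.mp (hC.disjoint d hdC c hc hdc) hid hi⟩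
  simp [clusterOf, this]

lemma clusterOf_mem (i : Fin n) : clusterOf C i ∈ C := by
  obtain ⟨c, hc, hi⟩ := hC.exists_mem i
  rwa [hC.clusterOf_eq hc hi]

lemma mem_clusterOf (i : Fin n) : i ∈ clusterOf C i := by
  obtain ⟨c, hc, hi⟩ := hC.exists_mem i
  rwa [hC.clusterOf_eq hc hi]

lemma mem_clusterOf_iff {i x : Fin n} : x ∈ clusterOf C i ↔ clusterOf C x = clusterOf C i :=
  ⟨hC.clusterOf_eq (hC.clusterOf_mem i), fun h => h ▸ hC.mem_clusterOf x⟩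

lemma mem_iff {c : Finset (Fin n)} : c ∈ C ↔ ∃ i, clusterOf C i = c := by
  refine ⟨fun hc => ?_, fun ⟨i, hi⟩ => hi ▸ hC.clusterOf_mem i⟩
  obtain ⟨i, hi⟩ := hC.nonempty c hc
  exact ⟨i, hC.clusterOf_eq hc hi⟩

lemma sameCluster_iff {i j : Fin n} : SameCluster C i j ↔ clusterOf C i = clusterOf C j := by
  refine ⟨fun ⟨c, hc, hi, hj⟩ => ?_, fun h => ?_⟩
  · rw [hC.clusterOf_eq hc hi, hC.clusterOf_eq hc hj]
  · exact ⟨clusterOf C i, hC.clusterOf_mem i, hC.mem_clusterOf i, h ▸ hC.mem_clusterOf j⟩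

lemma exists_clusterOf_ne (h : 1 < C.card) : ∃ i j, clusterOf C i ≠ clusterOf C j := by
  obtain ⟨a, ha, b, hb, hab⟩ := one_lt_card.mp h
  obtain ⟨i, hi⟩ := hC.nonempty a ha
  obtain ⟨j, hj⟩ := hC.nonempty b hb
  exact ⟨i, j, by rwa [hC.clusterOf_eq ha hi, hC.clusterOf_eq hb hj]⟩

lemma eq_of_refines_of_refines {Γ : Finset (Finset (Fin n))} (hΓ : IsPartition Γ)
    (hCΓ : Refines C Γ) (hΓC : Refines Γ C) : C = Γ := by
  have hpt : ∀ i, clusterOf C i = clusterOf Γ i := fun i => by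
    ext x
    rw [hC.mem_clusterOf_iff, hΓ.mem_clusterOf_iff]
    exact ⟨hCΓ x i, hΓC x i⟩
  ext c
  simp only [hC.mem_iff, hΓ.mem_iff, hpt]

lemma eq_of_refines_of_card_le {Γ : Finset (Finset (Fin n))} (hΓ : IsPartition Γ)
    (href : Refines C Γ) (hcard : C.card ≤ Γ.card) : C = Γ := by
  refine hC.eq_of_refines_of_refines hΓ href fun i j hij => ?_
  -- sending `c ∈ C` to the `Γ`-cluster containing it maps `C` onto `Γ`, so it is injective
  have hpoint : ∀ c (hc : c ∈ C) i, i ∈ c →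
      clusterOf Γ (hC.nonempty c hc).choose = clusterOf Γ i :=
    fun c hc i hi => href _ _ <| by
      rw [hC.clusterOf_eq hc (hC.nonempty c hc).choose_spec, hC.clusterOf_eq hc hi]
  refine inj_on_of_surj_on_of_card_le (fun c hc => clusterOf Γ (hC.nonempty c hc).choose)
    (fun c hc => hΓ.clusterOf_mem _) (fun g hg => ?_) hcard (hC.clusterOf_mem i)
    (hC.clusterOf_mem j) ?_
  · obtain ⟨x, rfl⟩ := hΓ.mem_iff.mp hg
    exact ⟨_, hC.clusterOf_mem x, hpoint _ (hC.clusterOf_mem x) x (hC.mem_clusterOf x)⟩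
  · rw [hpoint _ (hC.clusterOf_mem i) i (hC.mem_clusterOf i),
      hpoint _ (hC.clusterOf_mem j) j (hC.mem_clusterOf j), hij]

end IsPartition

lemma isPartition_singletons : IsPartition (singletons n) where
  exists_mem i := ⟨{i}, mem_image_of_mem _ (mem_univ i), mem_singleton_self i⟩
  disjoint := by
    simp only [singletons, mem_image, mem_univ, true_and, forall_exists_index,
      forall_apply_eq_imp_iff, disjoint_singleton, ne_eq]
    exact fun i j hij h => hij (h ▸ rfl)
  nonempty := by simp [singletons]

lemma clusterOf_singletons (i : Fin n) : clusterOf (singletons n) i = {i} :=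
  isPartition_singletons.clusterOf_eq (mem_image_of_mem _ (mem_univ i)) (mem_singleton_self i)

lemma card_singletons : (singletons n).card = n := by
  simp [singletons, card_image_of_injective _ singleton_injective]

section Merge

variable {C : Finset (Finset (Fin n))} {a b : Finset (Fin n)}

lemma mem_merge {c : Finset (Fin n)} :
    c ∈ merge C a b ↔ c = a ∪ b ∨ c ∈ C ∧ c ≠ a ∧ c ≠ b := by
  simp only [merge, mem_insert, mem_erase]
  tauto

variable (hC : IsPartition C) (ha : a ∈ C) (hb : b ∈ C)
include hC ha hb

lemma union_notMem (hab : a ≠ b) : a ∪ b ∉ C := by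
  intro h
  obtain ⟨x, hx⟩ := hC.nonempty a ha
  obtain ⟨y, hy⟩ := hC.nonempty b hb
  have hba : a ∪ b = a :=
    (hC.clusterOf_eq h (mem_union_left b hx)).symm.trans (hC.clusterOf_eq ha hx)
  exact hab <|
    (hC.clusterOf_eq ha (hba ▸ mem_union_right a hy)).symm.trans (hC.clusterOf_eq hb hy)

lemma isPartition_merge : IsPartition (merge C a b) where
  exists_mem i := by
    by_cases hi : clusterOf C i = a ∨ clusterOf C i = b
    · refine ⟨a ∪ b, mem_merge.mpr (Or.inl rfl), ?_⟩
      rcases hi with hi | hi <;> rw [← hi] <;> simp [hC.mem_clusterOf i]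
    · exact ⟨_, mem_merge.mpr (Or.inr ⟨hC.clusterOf_mem i, not_or.mp hi⟩), hC.mem_clusterOf i⟩
  disjoint c hc d hd hcd := by
    have hdisj : ∀ e ∈ C, e ≠ a → e ≠ b → Disjoint (a ∪ b) e := fun e he hea heb =>
      disjoint_union_left.mpr ⟨hC.disjoint a ha e he hea.symm, hC.disjoint b hb e he heb.symm⟩
    rcases mem_merge.mp hc with rfl | ⟨hcC, hca, hcb⟩ <;>
      rcases mem_merge.mp hd with rfl | ⟨hdC, hda, hdb⟩
    · exact absurd rfl hcd
    · exact hdisj d hdC hda hdb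
    · exact (hdisj c hcC hca hcb).symm
    · exact hC.disjoint c hcC d hdC hcd
  nonempty c hc := by
    rcases mem_merge.mp hc with rfl | ⟨hcC, -⟩
    · exact (hC.nonempty a ha).mono subset_union_left
    · exact hC.nonempty c hcC

lemma card_merge (hab : a ≠ b) : (merge C a b).card = C.card - 1 := by
  have hnotMem : a ∪ b ∉ (C.erase a).erase b := fun h =>
    union_notMem hC ha hb hab (mem_of_mem_erase (mem_of_mem_erase h))
  rw [merge, card_insert_of_notMem hnotMem, card_erase_of_mem (mem_erase.mpr ⟨hab.symm, hb⟩),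
    card_erase_of_mem ha]
  have : 2 ≤ C.card := one_lt_card.mpr ⟨a, ha, b, hb, hab⟩
  omega

lemma clusterOf_merge (i : Fin n) :
    clusterOf (merge C a b) i =
      if clusterOf C i = a ∨ clusterOf C i = b then a ∪ b else clusterOf C i := by
  have hC' := isPartition_merge hC ha hb
  split_ifs with hi
  · refine hC'.clusterOf_eq (mem_merge.mpr (Or.inl rfl)) ?_
    rcases hi with hi | hi <;> rw [← hi] <;> simp [hC.mem_clusterOf i]
  · exact hC'.clusterOf_eq (mem_merge.mpr (Or.inr ⟨hC.clusterOf_mem i, not_or.mp hi⟩))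
      (hC.mem_clusterOf i)

lemma clusterOf_merge_eq_iff (hab : a ≠ b) (i j : Fin n) :
    clusterOf (merge C a b) i = clusterOf (merge C a b) j ↔
      clusterOf C i = clusterOf C j ∨
        (clusterOf C i = a ∨ clusterOf C i = b) ∧ (clusterOf C j = a ∨ clusterOf C j = b) := by
  have hnot := union_notMem hC ha hb hab
  rw [clusterOf_merge hC ha hb, clusterOf_merge hC ha hb]
  split_ifs with hi hj hj
  · tauto
  · exact ⟨fun h => absurd (h ▸ hC.clusterOf_mem j) hnot, by grind⟩
  · exact ⟨fun h => absurd (h ▸ hC.clusterOf_mem i) hnot, by grind⟩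
  · tauto

lemma refines_merge (hab : a ≠ b) : Refines C (merge C a b) :=
  fun _ _ h => (clusterOf_merge_eq_iff hC ha hb hab _ _).mpr (Or.inl h)

end Merge

lemma refines_singletons (Γ : Finset (Finset (Fin n))) : Refines (singletons n) Γ := by
  intro i j h
  rw [clusterOf_singletons, clusterOf_singletons, singleton_inj] at h
  rw [h]

def edgeKey (s : Fin n → Fin n → ℝ) (p : Fin n × Fin n) : ℝ ×ₗ (Fin n ×ₗ Fin n) :=
  toLex (s p.1 p.2, toLex p)

section Step

variable {s : Fin n → Fin n → ℝ} {C : Finset (Finset (Fin n))}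

lemma mem_interPairs {m : ℝ ×ₗ (Fin n ×ₗ Fin n)} :
    m ∈ interPairs s C ↔
      ∃ p : Fin n × Fin n, clusterOf C p.1 ≠ clusterOf C p.2 ∧ edgeKey s p = m := by
  simp [interPairs, edgeKey]

lemma slStep_eq_self (h : ∀ i j, clusterOf C i = clusterOf C j) : slStep s C = C := by
  have : interPairs s C = ∅ := by simpa [interPairs] using h
  simp [slStep, this]

lemma exists_slStep_eq_merge {i j : Fin n} (hij : clusterOf C i ≠ clusterOf C j) :
    ∃ q : Fin n × Fin n, clusterOf C q.1 ≠ clusterOf C q.2 ∧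
      (∀ p : Fin n × Fin n, clusterOf C p.1 ≠ clusterOf C p.2 → edgeKey s p ≤ edgeKey s q) ∧
      slStep s C = merge C (clusterOf C q.1) (clusterOf C q.2) := by
  obtain ⟨m, hmax⟩ := max_of_nonempty ⟨_, mem_interPairs.mpr ⟨(i, j), hij, rfl⟩⟩
  obtain ⟨q, hq, rfl⟩ := mem_interPairs.mp (mem_of_max hmax)
  refine ⟨q, hq, fun p hp => le_max_of_eq (mem_interPairs.mpr ⟨p, hp, rfl⟩) hmax, ?_⟩
  simp [slStep, hmax, merge, edgeKey]

lemma isPartition_slStep (hC : IsPartition C) : IsPartition (slStep s C) := by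
  by_cases h : ∀ i j, clusterOf C i = clusterOf C j
  · rwa [slStep_eq_self h]
  push Not at h
  obtain ⟨i, j, hij⟩ := h
  obtain ⟨q, -, -, hstep⟩ := exists_slStep_eq_merge (s := s) hij
  rw [hstep]
  exact isPartition_merge hC (hC.clusterOf_mem _) (hC.clusterOf_mem _)

lemma card_slStep (hC : IsPartition C) (h : 1 < C.card) : (slStep s C).card = C.card - 1 := by
  obtain ⟨i, j, hij⟩ := hC.exists_clusterOf_ne h
  obtain ⟨q, hq, -, hstep⟩ := exists_slStep_eq_merge (s := s) hij
  rw [hstep]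
  exact card_merge hC (hC.clusterOf_mem _) (hC.clusterOf_mem _) hq

variable (s)

lemma isPartition_iterate_slStep (t : ℕ) : IsPartition ((slStep s)^[t] (singletons n)) :=
  Function.Iterate.rec _ isPartition_singletons (fun _ => isPartition_slStep) t

lemma card_iterate_slStep {t : ℕ} (ht : t < n) :
    ((slStep s)^[t] (singletons n)).card = n - t := by
  induction t with
  | zero => simp [card_singletons]
  | succ t ih =>
    rw [Function.iterate_succ_apply', card_slStep (isPartition_iterate_slStep s t)
      (by rw [ih (by omega)]; omega), ih (by omega)]
    omega

lemma SL_eq_iterate (k : ℕ) : SL s k = (slStep s)^[n - k] (singletons n) := rfl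

end Step

def DominantEdge (s : Fin n → Fin n → ℝ) (C : Finset (Finset (Fin n))) (a b : Fin n) : Prop :=
  clusterOf C a = clusterOf C b ∧
    ∀ p : Fin n × Fin n, clusterOf C p.1 ≠ clusterOf C p.2 → edgeKey s p ≤ edgeKey s (a, b)

def DominantlyConnected (s : Fin n → Fin n → ℝ) (C : Finset (Finset (Fin n))) : Prop :=
  ∀ i j, clusterOf C i = clusterOf C j → Relation.EqvGen (DominantEdge s C) i j

section Dominance

variable {s : Fin n → Fin n → ℝ} {C C' : Finset (Finset (Fin n))}

lemma DominantEdge.of_refines (hCC' : Refines C C') {a b : Fin n} (h : DominantEdge s C a b) :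
    DominantEdge s C' a b :=
  ⟨hCC' a b h.1, fun p hp => h.2 p fun hp' => hp (hCC' _ _ hp')⟩

lemma DominantlyConnected.slStep (hC : IsPartition C) (hconn : DominantlyConnected s C) :
    DominantlyConnected s (slStep s C) := by
  by_cases h : ∀ i j, clusterOf C i = clusterOf C j
  · rwa [slStep_eq_self h]
  push Not at h
  obtain ⟨i, j, hij⟩ := h
  obtain ⟨q, hq, hqmax, hstep⟩ := exists_slStep_eq_merge (s := s) hij
  rw [hstep]
  have hmerge := clusterOf_merge_eq_iff hC (hC.clusterOf_mem q.1) (hC.clusterOf_mem q.2) hq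
  have hrefines := refines_merge hC (hC.clusterOf_mem q.1) (hC.clusterOf_mem q.2) hq
  have hlift : ∀ {x y}, Relation.EqvGen (DominantEdge s C) x y →
      Relation.EqvGen (DominantEdge s (merge C (clusterOf C q.1) (clusterOf C q.2))) x y :=
    fun h => h.mono fun _ _ => DominantEdge.of_refines hrefines
  have hq_edge : DominantEdge s (merge C (clusterOf C q.1) (clusterOf C q.2)) q.1 q.2 :=
    ⟨(hmerge q.1 q.2).mpr (Or.inr ⟨Or.inl rfl, Or.inr rfl⟩),
      fun p hp => hqmax p fun h => hp (hrefines _ _ h)⟩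
  have hto_q : ∀ x, clusterOf C x = clusterOf C q.1 ∨ clusterOf C x = clusterOf C q.2 →
      Relation.EqvGen (DominantEdge s (merge C (clusterOf C q.1) (clusterOf C q.2))) x q.1 := by
    rintro x (hx | hx)
    · exact hlift (hconn x q.1 hx)
    · exact (hlift (hconn x q.2 hx)).trans _ _ _ (.symm _ _ (.rel _ _ hq_edge))
  intro x y hxy
  rcases (hmerge x y).mp hxy with hxy | ⟨hx, hy⟩
  · exact hlift (hconn x y hxy)
  · exact (hto_q x hx).trans _ _ _ (.symm _ _ (hto_q y hy))

variable (s)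

lemma dominantlyConnected_iterate_slStep (t : ℕ) :
    DominantlyConnected s ((slStep s)^[t] (singletons n)) := by
  induction t with
  | zero =>
    intro i j h
    rw [Function.iterate_zero_apply, clusterOf_singletons, clusterOf_singletons,
      singleton_inj] at h
    exact h ▸ .refl i
  | succ t ih =>
    rw [Function.iterate_succ_apply']
    exact ih.slStep (isPartition_iterate_slStep s t)

end Dominance

structure IsTransformation (Γ : Finset (Finset (Fin n))) (s s' : Fin n → Fin n → ℝ) :
    Prop where
  le_of_sameCluster : ∀ i j, i ≠ j → SameCluster Γ i j → s i j ≤ s' i j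
  le_of_not_sameCluster : ∀ i j, i ≠ j → ¬ SameCluster Γ i j → s' i j ≤ s i j

section Consistency

variable {s s' : Fin n → Fin n → ℝ} {D Γ : Finset (Finset (Fin n))}

lemma refines_slStep (hD : IsPartition D) (hΓ : IsPartition Γ) (hconn : DominantlyConnected s Γ)
    (htrans : IsTransformation Γ s s') (href : Refines D Γ) (hlt : Γ.card < D.card) :
    Refines (slStep s' D) Γ := by
  obtain ⟨i, j, hΓij, hDij⟩ :
      ∃ i j, clusterOf Γ i = clusterOf Γ j ∧ clusterOf D i ≠ clusterOf D j := by
    by_contra! h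
    exact hlt.ne (congrArg card (hΓ.eq_of_refines_of_card_le hD h hlt.le))
  obtain ⟨a, b, ⟨hΓab, hdom⟩, hDab⟩ := (hconn i j hΓij).exists_rel_apply_ne hDij
  obtain ⟨q, hq, hqmax, hstep⟩ := exists_slStep_eq_merge (s := s') hDab
  have hΓq : clusterOf Γ q.1 = clusterOf Γ q.2 := by
    -- otherwise `s' q ≤ s q ≤ s (a, b) ≤ s' (a, b) ≤ s' q` and the tie-break forces `q = (a, b)`
    by_contra hΓq
    have hq_ne : q.1 ≠ q.2 := fun h => hq (congrArg _ h)
    have hab_ne : a ≠ b := fun h => hDab (congrArg _ h)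
    have hq_eq : toLex q = toLex (a, b) := Prod.Lex.eq_of_toLex_le_of_toLex_le (hdom q hΓq)
      (hqmax (a, b) hDab)
      (htrans.le_of_not_sameCluster q.1 q.2 hq_ne (hΓ.sameCluster_iff.not.mpr hΓq))
      (htrans.le_of_sameCluster a b hab_ne (hΓ.sameCluster_iff.mpr hΓab))
    exact hΓq (toLex.injective hq_eq ▸ hΓab)
  have hto_q : ∀ x, clusterOf D x = clusterOf D q.1 ∨ clusterOf D x = clusterOf D q.2 →
      clusterOf Γ x = clusterOf Γ q.1 := by
    rintro x (hx | hx)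
    exacts [href _ _ hx, (href _ _ hx).trans hΓq.symm]
  rw [hstep]
  intro x y hxy
  rcases (clusterOf_merge_eq_iff hD (hD.clusterOf_mem _) (hD.clusterOf_mem _) hq x y).mp
    hxy with hxy | ⟨hx, hy⟩
  · exact href x y hxy
  · exact (hto_q x hx).trans (hto_q y hy).symm

lemma refines_iterate_slStep (hΓ : IsPartition Γ) (hconn : DominantlyConnected s Γ)
    (htrans : IsTransformation Γ s s') {t : ℕ} (ht : t ≤ n - Γ.card) :
    Refines ((slStep s')^[t] (singletons n)) Γ := by
  induction t with
  | zero => exact refines_singletons Γ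
  | succ t ih =>
    rw [Function.iterate_succ_apply']
    refine refines_slStep (isPartition_iterate_slStep s' t) hΓ hconn htrans (ih (by omega)) ?_
    rw [card_iterate_slStep s' (by omega)]
    omega

end Consistency

end SingleLinkage

open SingleLinkage in
theorem SL_consistent_general {n : ℕ} (s s' : Fin n → Fin n → ℝ)
    (k : ℕ) (hk1 : 1 ≤ k) (hkn : k ≤ n)
    (hin : ∀ i j, i ≠ j → SameCluster (SL s k) i j → s i j ≤ s' i j)
    (hout : ∀ i j, i ≠ j → ¬ SameCluster (SL s k) i j → s' i j ≤ s i j) :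
    SL s' k = SL s k := by
  have hΓ : IsPartition (SL s k) := isPartition_iterate_slStep s (n - k)
  have hcard : (SL s k).card = k := by
    rw [SL_eq_iterate, card_iterate_slStep s (by omega)]
    omega
  rw [SL_eq_iterate s']
  refine (isPartition_iterate_slStep s' (n - k)).eq_of_refines_of_card_le hΓ ?_ ?_
  · exact refines_iterate_slStep hΓ (dominantlyConnected_iterate_slStep s (n - k)) ⟨hin, hout⟩
      (by rw [hcard])
  · rw [card_iterate_slStep s' (by omega), hcard]
    omega

/-- Single-Linkage satisfies Consistency: if `s'` is a `SL s k`-transformation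
of `s`, then `SL s' k = SL s k`. -/
theorem SL_consistent {n : ℕ} (s s' : Fin n → Fin n → ℝ) (hs : Sim s) (hs' : Sim s')
    (k : ℕ) (hk1 : 1 ≤ k) (hkn : k ≤ n)
    (hin : ∀ i j, i ≠ j → SameCluster (SL s k) i j → s i j ≤ s' i j)
    (hout : ∀ i j, i ≠ j → ¬ SameCluster (SL s k) i j → s' i j ≤ s i j) :
    SL s' k = SL s k :=
  SL_consistent_general s s' k hk1 hkn hin hout
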